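/- arXiv:1412.5748 — 5 statements merged into one kernel-verified Lean document; each statement's English description precedes it below -/
import Mathlib

section
/- Let f : ℂ → ℂ, z : ℝ → ℂ and θ : ℝ → ℝ be such that f is complex-differentiable at z(t₀), z is differentiable at t₀, θ is differentiable at t₀, f(z(t)) = exp(i·θ(t)) for all t in a neighborhood of t₀, and moreover z'(t₀) ≠ 0 and θ'(t₀) ≠ 0. Then f'(z(t₀)) ≠ 0 and exp(i·θ(t₀)) = (1/i) · (z'(t₀)/|z'(t₀)|) · (θ'(t₀)/|θ'(t₀)|) · (f'(z(t₀))/|f'(z(t₀))|). -/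
/-!
Differentiating `f (z t) = exp (i θ t)` at `t₀` gives `f'(z) z' = i θ' exp (i θ)`. The
normalization `w ↦ w / |w|` is multiplicative and `|exp (i θ)| = 1`, so
`(f'/|f'|) (z'/|z'|) = i (θ'/|θ'|) exp (i θ)`, which is the claim since `(θ'/|θ'|)² = 1`.
The right-hand side is nonzero because `θ' ≠ 0`, hence so is `f'(z)`.
-/

open Complex

lemma hasDerivAt_cexp_I_mul_ofReal {θ : ℝ → ℝ} {θ' t₀ : ℝ} (hθ : HasDerivAt θ θ' t₀) :
    HasDerivAt (fun t => exp (I * θ t)) (I * θ' * exp (I * θ t₀)) t₀ := by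
  simpa [mul_comm] using (hθ.ofReal_comp.const_mul I).cexp

lemma deriv_mul_deriv_eq_of_comp_eq_cexp {f : ℂ → ℂ} {z : ℝ → ℂ} {θ : ℝ → ℝ} {t₀ : ℝ}
    (hf : DifferentiableAt ℂ f (z t₀)) (hz : DifferentiableAt ℝ z t₀)
    (hθ : DifferentiableAt ℝ θ t₀) (hfz : ∀ᶠ t in nhds t₀, f (z t) = exp (I * θ t)) :
    deriv f (z t₀) * deriv z t₀ = I * deriv θ t₀ * exp (I * θ t₀) :=
  (hf.hasDerivAt.comp t₀ hz.hasDerivAt).unique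
    ((hasDerivAt_cexp_I_mul_ofReal hθ.hasDerivAt).congr_of_eventuallyEq hfz)

lemma mul_div_norm_mul (w v : ℂ) : w * v / ‖w * v‖ = w / ‖w‖ * (v / ‖v‖) := by
  rw [norm_mul, ofReal_mul, mul_div_mul_comm]

lemma ofReal_div_abs_mul_self {b : ℝ} (hb : b ≠ 0) :
    (b / ((|b| : ℝ) : ℂ)) * (b / ((|b| : ℝ) : ℂ)) = 1 := by
  rw [div_mul_div_comm, ← ofReal_mul, ← ofReal_mul, abs_mul_abs_self, div_self]
  exact_mod_cast mul_ne_zero hb hb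

lemma eq_of_mul_eq_I_mul_mul {c a e : ℂ} {b : ℝ} (he : ‖e‖ = 1) (hb : b ≠ 0)
    (h : c * a = I * b * e) :
    c ≠ 0 ∧ e = 1 / I * (a / ‖a‖) * (b / ((|b| : ℝ) : ℂ)) * (c / ‖c‖) := by
  have hunit : c / ‖c‖ * (a / ‖a‖) = I * (b / ((|b| : ℝ) : ℂ)) * e := by
    have := congrArg (fun w : ℂ => w / ‖w‖) h
    simpa only [mul_div_norm_mul, norm_I, he, norm_real, Real.norm_eq_abs, ofReal_one,
      div_one] using this
  refine ⟨?_, ?_⟩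
  · rintro rfl
    have : ‖I * b * e‖ = 0 := by rw [← h, zero_mul, norm_zero]
    simp [he, hb] at this
  · rw [div_I, one_mul]
    linear_combination (I * (b / ((|b| : ℝ) : ℂ))) * hunit - e * ofReal_div_abs_mul_self hb
      + e * (b / ((|b| : ℝ) : ℂ)) ^ 2 * I_mul_I

theorem ahlfors_boundary_relationship_general
    (f : ℂ → ℂ) (z : ℝ → ℂ) (θ : ℝ → ℝ) (t₀ : ℝ)
    (hf : DifferentiableAt ℂ f (z t₀))
    (hz : DifferentiableAt ℝ z t₀)
    (hfz : ∀ᶠ t in nhds t₀, f (z t) = Complex.exp (Complex.I * (θ t : ℂ)))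
    (hθ' : deriv θ t₀ ≠ 0) :
    deriv f (z t₀) ≠ 0 ∧
      Complex.exp (Complex.I * (θ t₀ : ℂ)) =
        (1 / Complex.I) * (deriv z t₀ / ((‖deriv z t₀‖ : ℝ) : ℂ)) *
          (((deriv θ t₀ : ℝ) : ℂ) / ((|deriv θ t₀| : ℝ) : ℂ)) *
          (deriv f (z t₀) / ((‖deriv f (z t₀)‖ : ℝ) : ℂ)) :=
  eq_of_mul_eq_I_mul_mul (norm_exp_I_mul_ofReal _) hθ'
    (deriv_mul_deriv_eq_of_comp_eq_cexp hf hz (differentiableAt_of_deriv_ne_zero hθ') hfz)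

/-- If `f(z(t)) = exp(i θ(t))` near `t₀`, with `f` complex-differentiable at `z t₀`,
`z` differentiable at `t₀`, `θ` differentiable at `t₀`, `z'(t₀) ≠ 0` and `θ'(t₀) ≠ 0`,
then `f'(z(t₀)) ≠ 0` and
`exp(i θ(t₀)) = (1/i) (z'(t₀)/|z'(t₀)|) (θ'(t₀)/|θ'(t₀)|) (f'(z(t₀))/|f'(z(t₀))|)`. -/
theorem ahlfors_boundary_relationship
    (f : ℂ → ℂ) (z : ℝ → ℂ) (θ : ℝ → ℝ) (t₀ : ℝ)
    (hf : DifferentiableAt ℂ f (z t₀))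
    (hz : DifferentiableAt ℝ z t₀)
    (hθ : DifferentiableAt ℝ θ t₀)
    (hfz : ∀ᶠ t in nhds t₀, f (z t) = Complex.exp (Complex.I * (θ t : ℂ)))
    (hz' : deriv z t₀ ≠ 0)
    (hθ' : deriv θ t₀ ≠ 0) :
    deriv f (z t₀) ≠ 0 ∧
      Complex.exp (Complex.I * (θ t₀ : ℂ)) =
        (1 / Complex.I) * (deriv z t₀ / ((‖deriv z t₀‖ : ℝ) : ℂ)) *
          (((deriv θ t₀ : ℝ) : ℂ) / ((|deriv θ t₀| : ℝ) : ℂ)) *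
          (deriv f (z t₀) / ((‖deriv f (z t₀)‖ : ℝ) : ℂ)) :=
  ahlfors_boundary_relationship_general f z θ t₀ hf hz hfz hθ'
end

section
/- Let z : ℝ → ℂ be differentiable in a neighborhood of t₀ with z' differentiable at t₀ and z'(t₀) ≠ 0, let A : ℝ → ℂ be differentiable at t₀ with A(t₀) ≠ 0, and suppose z(s) ≠ z(t₀) for all s ≠ t₀ in some punctured neighborhood of t₀. Then the limit as s → t₀ (s ≠ t₀) of (1/π)·Im( (A(t₀)/A(s)) · z'(s)/(z(s) − z(t₀)) ) equals (1/π)·( (1/2)·Im(z''(t₀)/z'(t₀)) − Im(A'(t₀)/A(t₀)) ). -/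
/-!
By second-order Taylor expansion,
`z'(s) / (z(s) - z(t₀)) = 1 / (s - t₀) + z''(t₀) / (2 z'(t₀)) + o(1)`,
and `A(t₀) / A(s) = 1 - (A'(t₀) / A(t₀)) (s - t₀) + o(s - t₀)`. Multiplying, the kernel equals
`1 / (s - t₀) + z''(t₀) / (2 z'(t₀)) - A'(t₀) / A(t₀) + o(1)`, and the pole term is real, so it
disappears from the imaginary part.
-/

open Filter Topology Asymptotics

theorem taylor_two_isLittleO {E : Type*} [NormedAddCommGroup E] [NormedSpace ℝ E]
    {f : ℝ → E} {x₀ : ℝ} (hf : ∀ᶠ x in 𝓝 x₀, DifferentiableAt ℝ f x)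
    (hf' : DifferentiableAt ℝ (deriv f) x₀) :
    (fun x => f x - f x₀ - (x - x₀) • deriv f x₀ - ((x - x₀) ^ 2 / 2) • deriv (deriv f) x₀)
      =o[𝓝 x₀] fun x => (x - x₀) ^ 2 := by
  obtain ⟨ε, hε, hdiff⟩ := Metric.eventually_nhds_iff_ball.mp hf
  have hball : Metric.ball x₀ ε ∈ 𝓝 x₀ := Metric.ball_mem_nhds x₀ hε
  have hderiv : ∀ x ∈ Metric.ball x₀ ε, HasDerivWithinAt
      (fun x => f x - f x₀ - (x - x₀) • deriv f x₀ - ((x - x₀) ^ 2 / 2) • deriv (deriv f) x₀)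
      (deriv f x - deriv f x₀ - (x - x₀) • deriv (deriv f) x₀) (Metric.ball x₀ ε) x := by
    intro x hx
    have hlin : HasDerivAt (fun x => x - x₀) 1 x := (hasDerivAt_id x).sub_const x₀
    have hquad : HasDerivAt (fun x => (x - x₀) ^ 2 / 2) (x - x₀) x := by
      simpa using (hlin.fun_pow 2).div_const 2
    exact ((((hdiff x hx).hasDerivAt.sub_const (f x₀)).sub
      (by simpa using hlin.smul_const (deriv f x₀))).sub
      (hquad.smul_const (deriv (deriv f) x₀))).hasDerivWithinAt
  have hderiv_o : (fun x => deriv f x - deriv f x₀ - (x - x₀) • deriv (deriv f) x₀)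
      =o[𝓝[Metric.ball x₀ ε] x₀] fun x => (x - x₀) ^ 1 := by
    simp only [nhdsWithin_eq_nhds.mpr hball, pow_one]
    exact hasDerivAt_iff_isLittleO.mp hf'.hasDerivAt
  simpa [nhdsWithin_eq_nhds.mpr hball] using
    (convex_ball x₀ ε).isLittleO_pow_succ_real (Metric.mem_ball_self hε) hderiv hderiv_o

theorem tendsto_deriv_div_sub_sub_inv {z : ℝ → ℂ} {t₀ : ℝ}
    (hz : ∀ᶠ t in 𝓝 t₀, DifferentiableAt ℝ z t) (hz' : DifferentiableAt ℝ (deriv z) t₀)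
    (hz'0 : deriv z t₀ ≠ 0) :
    Tendsto (fun s => deriv z s / (z s - z t₀) - ((s - t₀ : ℝ) : ℂ)⁻¹) (𝓝[≠] t₀)
      (𝓝 (deriv (deriv z) t₀ / (2 * deriv z t₀))) := by
  have hz₀ : HasDerivAt z (deriv z t₀) t₀ := hz.self_of_nhds.hasDerivAt
  have hslope : Tendsto (slope z t₀) (𝓝[≠] t₀) (𝓝 (deriv z t₀)) :=
    hasDerivAt_iff_tendsto_slope.mp hz₀
  have hslope' : Tendsto (slope (deriv z) t₀) (𝓝[≠] t₀) (𝓝 (deriv (deriv z) t₀)) :=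
    hasDerivAt_iff_tendsto_slope.mp hz'.hasDerivAt
  have htaylor := ((taylor_two_isLittleO hz hz').tendsto_inv_smul_nhds_zero).mono_left
    (nhdsWithin_le_nhds (s := {t₀}ᶜ))
  -- `z'(s) / (z(s) - z(t₀)) - 1 / (s - t₀)` equals
  -- `(slope z' - (Taylor remainder) / (s - t₀)² - z''(t₀) / 2) / slope z`.
  have hlim := ((hslope'.sub htaylor).sub_const (deriv (deriv z) t₀ / 2)).div hslope hz'0
  convert hlim.congr' ?_ using 2
  · ring
  filter_upwards [self_mem_nhdsWithin, hz₀.eventually_ne hz'0] with s hst hzs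
  have hs : (s : ℂ) - t₀ ≠ 0 := by exact_mod_cast sub_ne_zero.mpr hst
  have hzs : z s - z t₀ ≠ 0 := sub_ne_zero.mpr hzs
  simp only [Pi.div_apply, slope_def_module, Complex.real_smul]
  push_cast
  field_simp
  ring

theorem tendsto_const_div_mul_deriv_div_sub_sub_inv {z A : ℝ → ℂ} {t₀ : ℝ}
    (hz : ∀ᶠ t in 𝓝 t₀, DifferentiableAt ℝ z t) (hz' : DifferentiableAt ℝ (deriv z) t₀)
    (hz'0 : deriv z t₀ ≠ 0) (hA : DifferentiableAt ℝ A t₀) (hA0 : A t₀ ≠ 0) :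
    Tendsto (fun s => A t₀ / A s * deriv z s / (z s - z t₀) - ((s - t₀ : ℝ) : ℂ)⁻¹) (𝓝[≠] t₀)
      (𝓝 (deriv (deriv z) t₀ / (2 * deriv z t₀) - deriv A t₀ / A t₀)) := by
  have hg : HasDerivAt (fun s => A t₀ / A s) (-(deriv A t₀ / A t₀)) t₀ := by
    refine ((hasDerivAt_const t₀ (A t₀)).fun_div hA.hasDerivAt hA0).congr_deriv ?_
    field_simp
    ring
  have hg_cont : Tendsto (fun s => A t₀ / A s) (𝓝[≠] t₀) (𝓝 1) := by
    simpa [div_self hA0] using hg.continuousAt.tendsto.mono_left nhdsWithin_le_nhds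
  have hlim := (hg_cont.mul (tendsto_deriv_div_sub_sub_inv hz hz' hz'0)).add
    (hasDerivAt_iff_tendsto_slope.mp hg)
  convert hlim using 2
  · simp only [slope_def_module, Complex.real_smul, Complex.ofReal_inv, div_self hA0]
    ring
  · ring

theorem generalized_neumann_kernel_diagonal_general
    (z : ℝ → ℂ) (A : ℝ → ℂ) (t₀ : ℝ)
    (hz : ∀ᶠ t in nhds t₀, DifferentiableAt ℝ z t)
    (hz' : DifferentiableAt ℝ (deriv z) t₀)
    (hz'0 : deriv z t₀ ≠ 0)
    (hA : DifferentiableAt ℝ A t₀)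
    (hA0 : A t₀ ≠ 0) :
    Filter.Tendsto
      (fun s : ℝ => (1 / Real.pi) * ((A t₀ / A s) * deriv z s / (z s - z t₀)).im)
      (nhdsWithin t₀ {t₀}ᶜ)
      (nhds ((1 / Real.pi) *
        ((1 / 2) * (deriv (deriv z) t₀ / deriv z t₀).im - (deriv A t₀ / A t₀).im))) := by
  have hK := tendsto_const_div_mul_deriv_div_sub_sub_inv hz hz' hz'0 hA hA0
  have him := (Complex.continuous_im.tendsto _).comp hK
  convert him.const_mul (1 / Real.pi) using 2
  · simp [Complex.sub_im]
  · rw [Complex.sub_im, mul_comm 2, ← div_div, Complex.div_ofNat_im]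
    ring

/-- Diagonal value of the generalized Neumann kernel: as `s → t₀` (`s ≠ t₀`),
`(1/π) Im((A(t₀)/A(s)) z'(s)/(z(s)-z(t₀)))` tends to
`(1/π) ((1/2) Im(z''(t₀)/z'(t₀)) - Im(A'(t₀)/A(t₀)))`. -/
theorem generalized_neumann_kernel_diagonal
    (z : ℝ → ℂ) (A : ℝ → ℂ) (t₀ : ℝ)
    (hz : ∀ᶠ t in nhds t₀, DifferentiableAt ℝ z t)
    (hz' : DifferentiableAt ℝ (deriv z) t₀)
    (hz'0 : deriv z t₀ ≠ 0)
    (hA : DifferentiableAt ℝ A t₀)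
    (hA0 : A t₀ ≠ 0)
    (hzz : ∀ᶠ s in nhdsWithin t₀ {t₀}ᶜ, z s ≠ z t₀) :
    Filter.Tendsto
      (fun s : ℝ => (1 / Real.pi) * ((A t₀ / A s) * deriv z s / (z s - z t₀)).im)
      (nhdsWithin t₀ {t₀}ᶜ)
      (nhds ((1 / Real.pi) *
        ((1 / 2) * (deriv (deriv z) t₀ / deriv z t₀).im - (deriv A t₀ / A t₀).im))) :=
  generalized_neumann_kernel_diagonal_general z A t₀ hz hz' hz'0 hA hA0
end

section
/- Let z : ℝ → ℂ be twice differentiable in a neighborhood of t₀ with z'' differentiable at t₀, suppose z'(t₀) ≠ 0, and suppose z(s) ≠ z(t₀) for all s ≠ t₀ in some punctured neighborhood of t₀. Then the limit as s → t₀ (s ≠ t₀) of (1/(s − t₀)) · ( z'(t₀)/(z(s) − z(t₀)) − 1/(s − t₀) + z''(t₀)/(2·z'(t₀)) ) equals z''(t₀)²/(4·z'(t₀)²) − z'''(t₀)/(6·z'(t₀)). -/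
/-!
Write `h = s - t₀`, `a = z'(t₀)`, `b = z''(t₀)`, `c = z'''(t₀)`. Taylor's theorem with Peano
remainder gives `z s - z t₀ = h (a + (b/2) h + G h²)` with `G → c/6`, and substituting this,
the expression under the limit becomes exactly `((b/2)(b/2 + G h) - a G) / (a (a + (b/2) h + G h²))`,
which is continuous in `(h, G)` at `(0, c/6)` because `a ≠ 0`.
-/

open Filter Topology Asymptotics Set

section Taylor

variable {E : Type*} [NormedAddCommGroup E] [NormedSpace ℝ E]

theorem isLittleO_pow_succ_of_eventually_hasDerivAt {f f' : ℝ → E} {x₀ : ℝ} {n : ℕ}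
    (hf : ∀ᶠ x in 𝓝 x₀, HasDerivAt f (f' x) x) (hf' : f' =o[𝓝 x₀] fun x ↦ (x - x₀) ^ n) :
    (fun x ↦ f x - f x₀) =o[𝓝 x₀] fun x ↦ (x - x₀) ^ (n + 1) := by
  obtain ⟨ε, hε, hball⟩ := Metric.eventually_nhds_iff_ball.1 hf
  have hnhds : 𝓝[Metric.ball x₀ ε] x₀ = 𝓝 x₀ :=
    nhdsWithin_eq_nhds.2 (Metric.ball_mem_nhds x₀ hε)
  have := (convex_ball x₀ ε).isLittleO_pow_succ_real (Metric.mem_ball_self hε)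
    (fun x hx ↦ (hball x hx).hasDerivWithinAt) (hnhds ▸ hf')
  rwa [hnhds] at this

/-- Peano form of Taylor's theorem: unlike `taylor_isLittleO`, no continuity of derivatives is
assumed. -/
theorem taylor_isLittleO_of_differentiableAt {f : ℝ → E} {x₀ : ℝ} {n : ℕ}
    (hf : ∀ k < n, ∀ᶠ x in 𝓝 x₀, DifferentiableAt ℝ (iteratedDeriv k f) x)
    (hfn : DifferentiableAt ℝ (iteratedDeriv n f) x₀) :
    (fun x ↦ f x - taylorWithinEval f (n + 1) univ x₀ x) =o[𝓝 x₀]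
      fun x ↦ (x - x₀) ^ (n + 1) := by
  induction n generalizing f with
  | zero =>
    rw [iteratedDeriv_zero] at hfn
    have := hasDerivAt_iff_isLittleO.1 hfn.hasDerivAt
    simpa [taylorWithinEval_succ, iteratedDerivWithin_univ, sub_sub] using this
  | succ n ih =>
    have hderiv : (fun x ↦ deriv f x - taylorWithinEval (deriv f) (n + 1) univ x₀ x) =o[𝓝 x₀]
        fun x ↦ (x - x₀) ^ (n + 1) := by
      refine ih (fun k hk ↦ ?_) ?_
      · simpa only [← iteratedDeriv_succ'] using hf (k + 1) (by omega)
      · simpa only [← iteratedDeriv_succ'] using hfn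
    have hdiff : ∀ᶠ x in 𝓝 x₀, HasDerivAt (fun x ↦ f x - taylorWithinEval f (n + 2) univ x₀ x)
        (deriv f x - taylorWithinEval (deriv f) (n + 1) univ x₀ x) x := by
      filter_upwards [hf 0 (by omega)] with x hx
      rw [iteratedDeriv_zero] at hx
      simpa only [derivWithin_univ] using
        hx.hasDerivAt.fun_sub (hasDerivAt_taylorWithinEval_succ (x₀ := x₀) (s := univ) f (n + 1))
    simpa [taylorWithinEval_self] using
      isLittleO_pow_succ_of_eventually_hasDerivAt hdiff hderiv

theorem taylorWithinEval_three_univ (f : ℝ → E) (x₀ x : ℝ) :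
    taylorWithinEval f 3 univ x₀ x = f x₀ + (x - x₀) • deriv f x₀ +
      ((x - x₀) ^ 2 / 2) • deriv (deriv f) x₀ + ((x - x₀) ^ 3 / 6) • deriv (deriv (deriv f)) x₀ := by
  norm_num [taylor_within_apply, iteratedDerivWithin_univ, iteratedDeriv_succ, Nat.factorial,
    div_eq_inv_mul]

end Taylor

theorem one_div_mul_div_sub_one_div_add_div_eq {K : Type*} [Field K] [NeZero (2 : K)]
    {a b G h F : K} (ha : a ≠ 0) (hh : h ≠ 0) (hF : F ≠ 0)
    (hFdef : F = a + b / 2 * h + G * h ^ 2) :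
    1 / h * (a / (h * F) - 1 / h + b / (2 * a)) = (b / 2 * (b / 2 + G * h) - a * G) / (a * F) := by
  field_simp
  rw [hFdef]
  field_simp
  ring

theorem tendsto_kernel_of_isLittleO_cubic {𝕜 α : Type*} [NormedField 𝕜] [CharZero 𝕜]
    {l : Filter α} {a b c : 𝕜} (ha : a ≠ 0) {h Δ : α → 𝕜}
    (hh : Tendsto h l (𝓝 0)) (hh0 : ∀ᶠ x in l, h x ≠ 0)
    (hΔ : (fun x ↦ Δ x - (a * h x + b / 2 * h x ^ 2 + c / 6 * h x ^ 3)) =o[l] fun x ↦ h x ^ 3) :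
    Tendsto (fun x ↦ 1 / h x * (a / Δ x - 1 / h x + b / (2 * a))) l
      (𝓝 (b ^ 2 / (4 * a ^ 2) - c / (6 * a))) := by
  set G : α → 𝕜 :=
    fun x ↦ c / 6 + (Δ x - (a * h x + b / 2 * h x ^ 2 + c / 6 * h x ^ 3)) / h x ^ 3
  have hG : Tendsto G l (𝓝 (c / 6)) := by
    simpa using hΔ.tendsto_div_nhds_zero.const_add (c / 6)
  have hΔG : ∀ᶠ x in l, Δ x = h x * (a + b / 2 * h x + G x * h x ^ 2) := by
    filter_upwards [hh0] with x hx
    simp only [G]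
    field_simp
    ring
  have hF : Tendsto (fun x ↦ a + b / 2 * h x + G x * h x ^ 2) l (𝓝 a) := by
    simpa using (tendsto_const_nhds.add (hh.const_mul (b / 2))).add (hG.mul (hh.pow 2))
  have hlim : Tendsto (fun x ↦ (b / 2 * (b / 2 + G x * h x) - a * G x) /
      (a * (a + b / 2 * h x + G x * h x ^ 2))) l
      (𝓝 ((b / 2 * (b / 2 + c / 6 * 0) - a * (c / 6)) / (a * a))) :=
    ((tendsto_const_nhds.mul (tendsto_const_nhds.add (hG.mul hh))).sub
      (tendsto_const_nhds.mul hG)).div (tendsto_const_nhds.mul hF) (mul_ne_zero ha ha)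
  have hval : (b / 2 * (b / 2 + c / 6 * 0) - a * (c / 6)) / (a * a) =
      b ^ 2 / (4 * a ^ 2) - c / (6 * a) := by
    field_simp
    ring
  rw [hval] at hlim
  refine hlim.congr' ?_
  filter_upwards [hh0, hΔG, hF.eventually_ne ha] with x hx hxΔ hxF
  rw [hxΔ, one_div_mul_div_sub_one_div_add_div_eq ha hx hxF rfl]

theorem curve_kernel_local_expansion_general
    (z : ℝ → ℂ) (t₀ : ℝ)
    (hz : ∀ᶠ t in nhds t₀, DifferentiableAt ℝ z t ∧ DifferentiableAt ℝ (deriv z) t)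
    (hz'' : DifferentiableAt ℝ (deriv (deriv z)) t₀)
    (hz'0 : deriv z t₀ ≠ 0) :
    Filter.Tendsto
      (fun s : ℝ => (1 / ((s - t₀ : ℝ) : ℂ)) *
        (deriv z t₀ / (z s - z t₀) - 1 / ((s - t₀ : ℝ) : ℂ)
          + deriv (deriv z) t₀ / (2 * deriv z t₀)))
      (nhdsWithin t₀ {t₀}ᶜ)
      (nhds ((deriv (deriv z) t₀) ^ 2 / (4 * (deriv z t₀) ^ 2)
        - deriv (deriv (deriv z)) t₀ / (6 * deriv z t₀))) := by
  have htaylor := taylor_isLittleO_of_differentiableAt (n := 2) (x₀ := t₀) (f := z)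
    (fun k hk ↦ by
      interval_cases k
      · simpa only [iteratedDeriv_zero] using hz.mono fun t ht ↦ ht.1
      · simpa only [iteratedDeriv_one] using hz.mono fun t ht ↦ ht.2)
    (by simpa [iteratedDeriv_succ] using hz'')
  have hh : Tendsto (fun s : ℝ ↦ ((s - t₀ : ℝ) : ℂ)) (𝓝[≠] t₀) (𝓝 0) :=
    ((Complex.continuous_ofReal.comp (continuous_sub_right t₀)).tendsto' t₀ 0
      (by simp)).mono_left nhdsWithin_le_nhds
  have hh0 : ∀ᶠ s in 𝓝[≠] t₀, ((s - t₀ : ℝ) : ℂ) ≠ 0 := by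
    filter_upwards [self_mem_nhdsWithin] with s hs
    exact_mod_cast sub_ne_zero.2 hs
  refine tendsto_kernel_of_isLittleO_cubic hz'0 hh hh0 ?_
  refine ((htaylor.trans_isBigO (isBigO_of_le _ fun s ↦ by
    simp only [norm_pow, Complex.norm_real, le_refl])).mono nhdsWithin_le_nhds).congr_left
    fun s ↦ ?_
  rw [taylorWithinEval_three_univ]
  push_cast [Complex.real_smul]
  ring

/-- Local expansion of `z'(t₀)/(z(s) - z(t₀))`: as `s → t₀` (`s ≠ t₀`),
`(1/(s-t₀)) (z'(t₀)/(z(s)-z(t₀)) - 1/(s-t₀) + z''(t₀)/(2 z'(t₀)))` tends to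
`z''(t₀)²/(4 z'(t₀)²) - z'''(t₀)/(6 z'(t₀))`. -/
theorem curve_kernel_local_expansion
    (z : ℝ → ℂ) (t₀ : ℝ)
    (hz : ∀ᶠ t in nhds t₀, DifferentiableAt ℝ z t ∧ DifferentiableAt ℝ (deriv z) t)
    (hz'' : DifferentiableAt ℝ (deriv (deriv z)) t₀)
    (hz'0 : deriv z t₀ ≠ 0)
    (hzz : ∀ᶠ s in nhdsWithin t₀ {t₀}ᶜ, z s ≠ z t₀) :
    Filter.Tendsto
      (fun s : ℝ => (1 / ((s - t₀ : ℝ) : ℂ)) *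
        (deriv z t₀ / (z s - z t₀) - 1 / ((s - t₀ : ℝ) : ℂ)
          + deriv (deriv z) t₀ / (2 * deriv z t₀)))
      (nhdsWithin t₀ {t₀}ᶜ)
      (nhds ((deriv (deriv z) t₀) ^ 2 / (4 * (deriv z t₀) ^ 2)
        - deriv (deriv (deriv z)) t₀ / (6 * deriv z t₀))) :=
  curve_kernel_local_expansion_general z t₀ hz hz'' hz'0
end

section
/- Let z : ℝ → ℂ be twice differentiable in a neighborhood of t₀ with z'' differentiable at t₀, and suppose z'(t₀) ≠ 0. Then the limit as s → t₀ (s ≠ t₀) of (1/(s − t₀)²) · ( |z'(s)/z'(t₀)| − 1 − Re(z''(t₀)/z'(t₀))·(s − t₀) ) equals (1/2)·( Re(z'''(t₀)/z'(t₀)) + (Im(z''(t₀)/z'(t₀)))² ). -/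
/-!
Put `w = z' / z'(t₀)`, so `w(t₀) = 1`. Away from its zeros `‖w‖` has derivative
`⟪w, w'⟫ / ‖w‖`, whose own derivative at `t₀` is `‖w'‖² + Re w'' - (Re w')² = Re w'' + (Im w')²`.
The claim is then the Peano form of Taylor's theorem at order two for `‖w‖`, which follows from
l'Hôpital's rule and needs only one derivative of `‖w‖` near `t₀` and a second one at `t₀`.
-/

open Filter Topology RealInnerProductSpace

theorem tendsto_taylor_remainder_div_sq {f f' : ℝ → ℝ} {t₀ L : ℝ}
    (hf : ∀ᶠ t in 𝓝 t₀, HasDerivAt f (f' t) t) (hf' : HasDerivAt f' L t₀) :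
    Tendsto (fun s => (f s - f t₀ - f' t₀ * (s - t₀)) / (s - t₀) ^ 2) (𝓝[≠] t₀)
      (𝓝 (L / 2)) := by
  have hf_cont : ContinuousAt f t₀ := hf.self_of_nhds.continuousAt
  refine HasDerivAt.lhopital_zero_nhdsNE (f' := fun s => f' s - f' t₀)
    (g' := fun s => 2 * (s - t₀)) ?_ ?_ ?_ ?_ ?_ ?_
  · filter_upwards [nhdsWithin_le_nhds hf] with s hs
    have hlin := ((hasDerivAt_id' s).sub_const t₀).const_mul (f' t₀)
    exact ((hs.sub_const (f t₀)).sub hlin).congr_deriv (by ring)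
  · filter_upwards with s
    exact (((hasDerivAt_id' s).sub_const t₀).pow 2).congr_deriv (by ring)
  · filter_upwards [self_mem_nhdsWithin] with s hs
    simpa [sub_eq_zero] using hs
  · have : ContinuousAt (fun s => f s - f t₀ - f' t₀ * (s - t₀)) t₀ := by fun_prop
    simpa using this.tendsto.mono_left nhdsWithin_le_nhds
  · have : ContinuousAt (fun s : ℝ => (s - t₀) ^ 2) t₀ := by fun_prop
    simpa using this.tendsto.mono_left nhdsWithin_le_nhds
  · refine (hf'.tendsto_slope.div_const 2).congr fun s => ?_
    rw [slope_def_field, div_div, mul_comm]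

variable {E : Type*} [NormedAddCommGroup E] [InnerProductSpace ℝ E]

theorem HasDerivAt.norm {w : ℝ → E} {w' : E} {t : ℝ} (hw : HasDerivAt w w' t) (h0 : w t ≠ 0) :
    HasDerivAt (‖w ·‖) (⟪w t, w'⟫ / ‖w t‖) t := by
  have hsqrt := hw.norm_sq.sqrt (by positivity)
  simp only [Real.sqrt_sq (norm_nonneg _)] at hsqrt
  exact hsqrt.congr_deriv (by field_simp)

theorem HasDerivAt.inner_div_norm {w w' : ℝ → E} {w'' : E} {t : ℝ}
    (hw : HasDerivAt w (w' t) t) (hw' : HasDerivAt w' w'' t) (h0 : w t ≠ 0) :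
    HasDerivAt (fun s => ⟪w s, w' s⟫ / ‖w s‖)
      ((‖w' t‖ ^ 2 + ⟪w t, w''⟫) / ‖w t‖ - ⟪w t, w' t⟫ ^ 2 / ‖w t‖ ^ 3) t := by
  have hn : ‖w t‖ ≠ 0 := norm_ne_zero_iff.mpr h0
  refine ((hw.inner ℝ hw').div (hw.norm h0) hn).congr_deriv ?_
  rw [real_inner_self_eq_norm_sq]
  field_simp
  ring

theorem tendsto_norm_taylor_remainder_div_sq {w w' : ℝ → E} {w'' : E} {t₀ : ℝ}
    (hw : ∀ᶠ t in 𝓝 t₀, HasDerivAt w (w' t) t) (hw' : HasDerivAt w' w'' t₀) (h0 : w t₀ ≠ 0) :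
    Tendsto (fun s => (‖w s‖ - ‖w t₀‖ - ⟪w t₀, w' t₀⟫ / ‖w t₀‖ * (s - t₀)) / (s - t₀) ^ 2)
      (𝓝[≠] t₀)
      (𝓝 (((‖w' t₀‖ ^ 2 + ⟪w t₀, w''⟫) / ‖w t₀‖ - ⟪w t₀, w' t₀⟫ ^ 2 / ‖w t₀‖ ^ 3) / 2)) := by
  have h0_near : ∀ᶠ t in 𝓝 t₀, w t ≠ 0 := hw.self_of_nhds.continuousAt.eventually_ne h0
  refine tendsto_taylor_remainder_div_sq ?_ (hw.self_of_nhds.inner_div_norm hw' h0)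
  filter_upwards [hw, h0_near] with t ht ht0 using ht.norm ht0

/-- Local expansion of `|z'(s)/z'(t₀)|`: as `s → t₀` (`s ≠ t₀`),
`(1/(s-t₀)²) (|z'(s)/z'(t₀)| - 1 - Re(z''(t₀)/z'(t₀)) (s-t₀))` tends to
`(1/2) (Re(z'''(t₀)/z'(t₀)) + Im(z''(t₀)/z'(t₀))²)`. -/
theorem abs_derivative_ratio_local_expansion
    (z : ℝ → ℂ) (t₀ : ℝ)
    (hz : ∀ᶠ t in nhds t₀, DifferentiableAt ℝ z t ∧ DifferentiableAt ℝ (deriv z) t)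
    (hz'' : DifferentiableAt ℝ (deriv (deriv z)) t₀)
    (hz'0 : deriv z t₀ ≠ 0) :
    Filter.Tendsto
      (fun s : ℝ => (1 / (s - t₀) ^ 2) *
        (‖deriv z s / deriv z t₀‖ - 1
          - (deriv (deriv z) t₀ / deriv z t₀).re * (s - t₀)))
      (nhdsWithin t₀ {t₀}ᶜ)
      (nhds ((1 / 2) * ((deriv (deriv (deriv z)) t₀ / deriv z t₀).re
        + ((deriv (deriv z) t₀ / deriv z t₀).im) ^ 2))) := by
  set c := deriv z t₀
  have hw : ∀ᶠ t in 𝓝 t₀, HasDerivAt (fun s => deriv z s / c) (deriv (deriv z) t / c) t := by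
    filter_upwards [hz] with t ht using ht.2.hasDerivAt.div_const c
  have hw1 : deriv z t₀ / c = 1 := div_self hz'0
  have hexpansion := tendsto_norm_taylor_remainder_div_sq hw (hz''.hasDerivAt.div_const c)
    (by simp [hw1])
  simp only [hw1, norm_one, Complex.inner, map_one, mul_one, div_one, one_pow, Complex.sq_norm,
    Complex.normSq_apply] at hexpansion
  convert hexpansion using 2 with s
  · ring
  · ring
end

section
/- Let z : ℝ → ℂ be differentiable in a neighborhood of t₀ with z' differentiable at t₀ and z' nonvanishing in that neighborhood, let S : ℝ → ℂ be differentiable at t₀ with S nonvanishing in a neighborhood of t₀, and let θ : ℝ → ℝ be differentiable at t₀. Suppose that for all t in a neighborhood of t₀, exp(i·θ(t)) = (1/i) · S(t) · (z'(t)/|z'(t)|) / conj(S(t)). Then θ'(t₀) = 2·Im( S'(t₀)/S(t₀) ) + Im( z''(t₀)/z'(t₀) ). -/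
/-!
Multiplying the boundary relation by `|S|² |z'| = S · conj S · |z'|` turns it into
`exp(iθ) · r = (1/i) S² z'` with `r` real and nonzero. For such a product the logarithmic
derivative of the left side is `iθ' + r'/r`, whose imaginary part is `θ'`, while the right side
has logarithmic derivative `2 S'/S + z''/z'`.
-/

open Complex Filter Topology

theorem logDeriv_cexp_I_mul_ofReal {θ : ℝ → ℝ} {t : ℝ} (hθ : DifferentiableAt ℝ θ t) :
    logDeriv (fun s ↦ cexp (I * θ s)) t = I * deriv θ t := by
  rw [logDeriv_apply, ((hθ.hasDerivAt.ofReal_comp.const_mul I).cexp).deriv,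
    mul_div_cancel_left₀ _ (exp_ne_zero _)]

theorem logDeriv_ofReal_comp {r : ℝ → ℝ} {t : ℝ} (hr : DifferentiableAt ℝ r t) :
    logDeriv (fun s ↦ (r s : ℂ)) t = logDeriv r t := by
  rw [logDeriv_apply, logDeriv_apply, hr.hasDerivAt.ofReal_comp.deriv, ofReal_div]

theorem deriv_eq_im_logDeriv_of_cexp_mul_ofReal_eventuallyEq {θ r : ℝ → ℝ} {F : ℝ → ℂ}
    {t₀ : ℝ} (hθ : DifferentiableAt ℝ θ t₀) (hr : DifferentiableAt ℝ r t₀) (hr0 : r t₀ ≠ 0)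
    (hF : (fun t ↦ cexp (I * θ t) * r t) =ᶠ[𝓝 t₀] F) :
    deriv θ t₀ = (logDeriv F t₀).im := by
  rw [← (logDeriv_congr_nhds hF).self_of_nhds,
    logDeriv_mul (f := fun t ↦ cexp (I * θ t)) (g := fun t ↦ (r t : ℂ)) _ (exp_ne_zero _)
      (ofReal_ne_zero.2 hr0) (by fun_prop) hr.hasDerivAt.ofReal_comp.differentiableAt,
    logDeriv_cexp_I_mul_ofReal hθ, logDeriv_ofReal_comp hr]
  simp

theorem boundary_correspondence_derivative_szego_general
    (z : ℝ → ℂ) (S : ℝ → ℂ) (θ : ℝ → ℝ) (t₀ : ℝ)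
    (hz' : DifferentiableAt ℝ (deriv z) t₀)
    (hS : DifferentiableAt ℝ S t₀)
    (hθ : DifferentiableAt ℝ θ t₀)
    (heq : ∀ᶠ t in nhds t₀,
      Complex.exp (Complex.I * (θ t : ℂ)) =
        (1 / Complex.I) * S t * (deriv z t / (‖deriv z t‖ : ℂ)) /
          (starRingEnd ℂ) (S t)) :
    deriv θ t₀ = 2 * (deriv S t₀ / S t₀).im + (deriv (deriv z) t₀ / deriv z t₀).im := by
  have hne : ∀ᶠ t in 𝓝 t₀, S t ≠ 0 ∧ deriv z t ≠ 0 := by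
    filter_upwards [heq] with t ht
    have hrhs := exp_ne_zero (I * θ t)
    rw [ht] at hrhs
    simp only [ne_eq, div_eq_zero_iff, mul_eq_zero, map_eq_zero, ofReal_eq_zero, norm_eq_zero,
      one_div, inv_eq_zero, I_ne_zero, false_or, or_self, not_or] at hrhs
    exact hrhs.1
  obtain ⟨hS0, hz'0⟩ := hne.self_of_nhds
  have hF : (fun t ↦ cexp (I * θ t) * ↑(‖S t‖ ^ 2 * ‖deriv z t‖))
      =ᶠ[𝓝 t₀] fun t ↦ 1 / I * S t ^ 2 * deriv z t := by
    filter_upwards [heq, hne] with t ht ⟨hSt, hz't⟩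
    rw [ht]
    push_cast
    rw [← mul_conj']
    have hnorm : (‖deriv z t‖ : ℂ) ≠ 0 := by simpa using hz't
    have hconj : (starRingEnd ℂ) (S t) ≠ 0 := by simpa using hSt
    field_simp
  have hlog : logDeriv (fun t ↦ 1 / I * S t ^ 2 * deriv z t) t₀
      = 2 * logDeriv S t₀ + logDeriv (deriv z) t₀ := by
    simp_rw [mul_assoc]
    rw [logDeriv_const_mul _ _ (by simp),
      logDeriv_mul (f := fun t ↦ S t ^ 2) _ (pow_ne_zero _ hS0) hz'0 (hS.pow 2) hz',
      logDeriv_fun_pow hS]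
    norm_num
  rw [deriv_eq_im_logDeriv_of_cexp_mul_ofReal_eventuallyEq hθ
    ((hS.norm_sq ℝ).mul (hz'.norm ℝ hz'0)) (by simp [hS0, hz'0]) hF, hlog]
  simp [logDeriv_apply]

/-- Formula for the derivative of the boundary correspondence function: if
`exp(i θ(t)) = (1/i) S(t) (z'(t)/|z'(t)|) / conj(S(t))` near `t₀`, then
`θ'(t₀) = 2 Im(S'(t₀)/S(t₀)) + Im(z''(t₀)/z'(t₀))`. -/
theorem boundary_correspondence_derivative_szego
    (z : ℝ → ℂ) (S : ℝ → ℂ) (θ : ℝ → ℝ) (t₀ : ℝ)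
    (hz : ∀ᶠ t in nhds t₀, DifferentiableAt ℝ z t)
    (hz' : DifferentiableAt ℝ (deriv z) t₀)
    (hz'0 : ∀ᶠ t in nhds t₀, deriv z t ≠ 0)
    (hS : DifferentiableAt ℝ S t₀)
    (hS0 : ∀ᶠ t in nhds t₀, S t ≠ 0)
    (hθ : DifferentiableAt ℝ θ t₀)
    (heq : ∀ᶠ t in nhds t₀,
      Complex.exp (Complex.I * (θ t : ℂ)) =
        (1 / Complex.I) * S t * (deriv z t / (‖deriv z t‖ : ℂ)) /
          (starRingEnd ℂ) (S t)) :
    deriv θ t₀ = 2 * (deriv S t₀ / S t₀).im + (deriv (deriv z) t₀ / deriv z t₀).im :=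
  boundary_correspondence_derivative_szego_general z S θ t₀ hz' hS hθ heq
end
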